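/- Symmetrically: if ¬viable(p₁,...,pₙ) ∈ K and V^min(C[η]) ≥ ν, where η is the set of assignments satisfying K \ {¬viable}, then K is a 𝕋_C-conflict, i.e., no assignment θ ∈ 𝕍 satisfies K together with the theory 𝕋_C. -/

import Mathlib

open scoped ENNReal Classical

/-- A finite Markov chain with states `S`, an initial state, transition
probabilities and nonnegative state rewards. -/
structure MC (S : Type) [Fintype S] where
  init : S
  tr : S → S → NNReal
  rew : S → NNReal

namespace MC

variable {S : Type} [Fintype S]

/-- The `n`-step state distribution of a Markov chain. -/
noncomputable def dist (D : MC S) : ℕ → S → NNReal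
  | 0 => fun s => if s = D.init then 1 else 0
  | n + 1 => fun s => ∑ t, dist D n t * D.tr t s

/-- The expected total (undiscounted, indefinite-horizon) reward of a Markov chain:
`E[∑_i R(s_i)] = ∑_n ∑_s Pr_n(s) · R(s)`. -/
noncomputable def val (D : MC S) : ℝ≥0∞ :=
  ∑' n, ∑ s, (D.dist n s : ℝ≥0∞) * (D.rew s : ℝ≥0∞)

/-- States reachable (with positive probability) from the initial state. -/
inductive Reach (D : MC S) : S → Prop
  | init : Reach D D.init
  | step {s t : S} : Reach D s → 0 < D.tr s t → Reach D t

/-- A state is transient iff the expected number of visits to it is finite. -/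
def Transient (D : MC S) (s : S) : Prop := (∑' n, (D.dist n s : ℝ≥0∞)) < ⊤

end MC

/-- A finite Markov decision process with available-action sets `act`,
partial transition function `tr` and state rewards `rew`. -/
structure MDP (S A : Type) [Fintype S] [Fintype A] where
  init : S
  act : S → Finset A
  tr : S → A → S → NNReal
  rew : S → NNReal

namespace MDP

variable {S A : Type} [Fintype S] [Fintype A]

/-- A deterministic memoryless policy selects an available action in every state. -/
def IsPolicy (M : MDP S A) (π : S → A) : Prop := ∀ s, π s ∈ M.act s

/-- The Markov chain induced by a (memoryless deterministic) policy. -/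
def induce (M : MDP S A) (π : S → A) : MC S :=
  ⟨M.init, fun s => M.tr s (π s), M.rew⟩

/-- The maximal value `V^max(M) = max_π V(M[π])` over deterministic memoryless policies. -/
noncomputable def vmax (M : MDP S A) : ℝ≥0∞ :=
  ⨆ π : {π : S → A // M.IsPolicy π}, (M.induce π.1).val

/-- The minimal value `V^min(M) = min_π V(M[π])` over deterministic memoryless policies. -/
noncomputable def vmin (M : MDP S A) : ℝ≥0∞ :=
  ⨅ π : {π : S → A // M.IsPolicy π}, (M.induce π.1).val

/-- States of the MDP reachable (via available actions, with positive probability)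
from the initial state. -/
inductive Reach (M : MDP S A) : S → Prop
  | init : Reach M M.init
  | step {s t : S} {α : A} : Reach M s → α ∈ M.act s → 0 < M.tr s α t → Reach M t

end MDP

/-- A colored MDP `C = (M, 𝕍, κ)`: an MDP together with a finite constrained
parameter space of assignments `θ : P → ℤ` and a coloring `κ` such that every
assignment selects exactly one available action in every state. -/
structure CMDP (S A P : Type) [Fintype S] [Fintype A] where
  M : MDP S A
  space : Set (P → ℤ)
  finite : space.Finite
  coloring : S → A → Set (P → ℤ)
  unique : ∀ θ ∈ space, ∀ s : S, ∃! α : A, α ∈ M.act s ∧ θ ∈ coloring s α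

namespace CMDP

variable {S A P : Type} [Fintype S] [Fintype A] [Nonempty A]

/-- The induced MDP `C[η]`: keep at each state exactly the actions `α` with
`η ∩ κ(s,α) ≠ ∅`. -/
noncomputable def induced (C : CMDP S A P) (η : Set (P → ℤ)) : MDP S A where
  init := C.M.init
  act := fun s => (C.M.act s).filter fun α => (η ∩ C.coloring s α).Nonempty
  tr := C.M.tr
  rew := C.M.rew

/-- The (unique, for `θ ∈ 𝕍`) policy selected by an assignment `θ`. -/
noncomputable def policyOf (C : CMDP S A P) (θ : P → ℤ) : S → A := fun s =>
  if h : ∃ α : A, α ∈ C.M.act s ∧ θ ∈ C.coloring s α then h.choose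
  else Classical.arbitrary A

/-- The Markov chain `C[θ]` induced by a single assignment `θ`. -/
noncomputable def chain (C : CMDP S A P) (θ : P → ℤ) : MC S :=
  C.M.induce (C.policyOf θ)

/-- The value `V(C[θ])` of the Markov chain induced by assignment `θ`. -/
noncomputable def val (C : CMDP S A P) (θ : P → ℤ) : ℝ≥0∞ :=
  (C.chain θ).val

end CMDP

/-- An assignment `θ` satisfies a partial assignment `K`
(a set of literals `p = z`) if it makes all its literals true. -/
def Sat {P : Type} (θ : P → ℤ) (K : Set (P × ℤ)) : Prop := ∀ l ∈ K, θ l.1 = l.2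

namespace MDP

variable {S A : Type} [Fintype S] [Fintype A]

theorem vmin_le_val_induce {M : MDP S A} {π : S → A} (hπ : M.IsPolicy π) :
    M.vmin ≤ (M.induce π).val :=
  iInf_le (fun π : {π : S → A // M.IsPolicy π} => (M.induce π.1).val) ⟨π, hπ⟩

end MDP

namespace CMDP

variable {S A P : Type} [Fintype S] [Fintype A] [Nonempty A]

theorem policyOf_spec (C : CMDP S A P) {θ : P → ℤ} {s : S}
    (h : ∃ α : A, α ∈ C.M.act s ∧ θ ∈ C.coloring s α) :
    C.policyOf θ s ∈ C.M.act s ∧ θ ∈ C.coloring s (C.policyOf θ s) := by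
  simpa only [policyOf, dif_pos h] using h.choose_spec

theorem policyOf_spec_of_mem_space (C : CMDP S A P) {θ : P → ℤ} (hθ : θ ∈ C.space)
    (s : S) : C.policyOf θ s ∈ C.M.act s ∧ θ ∈ C.coloring s (C.policyOf θ s) :=
  C.policyOf_spec (C.unique θ hθ s).exists

theorem isPolicy_induced_policyOf (C : CMDP S A P) {η : Set (P → ℤ)} {θ : P → ℤ}
    (hθ : θ ∈ C.space) (hη : θ ∈ η) : (C.induced η).IsPolicy (C.policyOf θ) := by
  intro s
  obtain ⟨hact, hcol⟩ := C.policyOf_spec_of_mem_space hθ s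
  exact Finset.mem_filter.mpr ⟨hact, θ, hη, hcol⟩

theorem vmin_induced_le_val (C : CMDP S A P) {η : Set (P → ℤ)} {θ : P → ℤ}
    (hθ : θ ∈ C.space) (hη : θ ∈ η) : (C.induced η).vmin ≤ C.val θ :=
  MDP.vmin_le_val_induce (C.isPolicy_induced_policyOf hθ hη)

end CMDP

/-- If `¬viable ∈ K` and `V^min(C[η]) ≥ ν` for
`η = {θ ∈ 𝕍 : θ satisfies K \ {¬viable}}`, then `K` is a `𝕋_C`-conflict: no
`θ ∈ 𝕍` satisfies the literals of `K` while being non-viable (`V(C[θ]) < ν`). -/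
theorem stmt_7 {S A P : Type} [Fintype S] [Fintype A] [Nonempty A]
    (C : CMDP S A P) (K : Set (P × ℤ)) (ν : ℝ≥0∞)
    (h : ν ≤ (C.induced {θ ∈ C.space | Sat θ K}).vmin) :
    ¬ ∃ θ ∈ C.space, Sat θ K ∧ C.val θ < ν := by
  rintro ⟨θ, hθ, hsat, hlt⟩
  exact (h.trans (C.vmin_induced_le_val hθ ⟨hθ, hsat⟩)).not_gt hlt
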